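/- There exists a constant C > 0, depending only on γ and independent of R, such that for all R > 0, ρ > 0 and u ∈ ℝ: |η^{ψ_R}(ρ, u) − η^{ψ_E}(ρ, u)| ≤ C ρ(|u| + ρ^θ)² ∫_S (1 − s²)^λ ds and |q^{ψ_R}(ρ, u) − q^{ψ_E}(ρ, u)| ≤ C ρ(|u| + ρ^θ)³ ∫_S (1 − s²)^λ ds, where ψ_E(s) = s²/2 and S = {s ∈ [−1, 1] : |u + ρ^θ s| ≥ R}. -/

import Mathlib

/-!
Since `h_R` takes values in `[0, 1]` and equals `1` on `[-R, R]`, both `ψ_R` and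
`s²/2 - ψ_R(s) = ∫₀^s ∫₀^y (1 - h_R)` are nonnegative, and the latter vanishes for `|s| ≤ R`.
Hence `|ψ_R(v) - v²/2| ≤ v²/2 · 1_{|v| ≥ R}`. For `s ∈ [-1, 1]` the argument `v = u + ρ^θ s`
satisfies `|v| ≤ |u| + ρ^θ`, and the flux prefactor satisfies
`|u + θ ρ^θ s| ≤ (1 + θ)(|u| + ρ^θ)`, so both bounds hold with `C = (1 + θ)/2`. The weight
`(1 - s²)^λ` is integrable on `[-1, 1]` because `λ > -1`.
-/

open Real MeasureTheory

/-- `θ = (γ − 1)/2`. -/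
noncomputable def thetaExp (γ : ℝ) : ℝ := (γ - 1) / 2

/-- `λ = (3 − γ)/(2(γ − 1))`. -/
noncomputable def lamExp (γ : ℝ) : ℝ := (3 - γ) / (2 * (γ - 1))

/-- The weak entropy of the isentropic Euler system with polytropic pressure, generated by `ψ`:
`η^ψ(ρ, u) = ρ ∫_{−1}^{1} ψ(u + ρ^θ s)(1 − s²)^λ ds`. -/
noncomputable def entropy (γ : ℝ) (ψ : ℝ → ℝ) (ρ u : ℝ) : ℝ :=
  ρ * ∫ s in (-1:ℝ)..1, ψ (u + ρ ^ thetaExp γ * s) * (1 - s ^ 2) ^ lamExp γ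

/-- The weak entropy flux generated by `ψ`:
`q^ψ(ρ, u) = ρ ∫_{−1}^{1} (u + θρ^θ s) ψ(u + ρ^θ s)(1 − s²)^λ ds`. -/
noncomputable def entropyFlux (γ : ℝ) (ψ : ℝ → ℝ) (ρ u : ℝ) : ℝ :=
  ρ * ∫ s in (-1:ℝ)..1,
    (u + thetaExp γ * ρ ^ thetaExp γ * s) * ψ (u + ρ ^ thetaExp γ * s) * (1 - s ^ 2) ^ lamExp γ

/-- The truncated second derivative: `h_R(w) = 1` if `|w| ≤ R`, `(2R − |w|)/R` if
`R ≤ |w| ≤ 2R`, and `0` if `|w| ≥ 2R`. -/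
noncomputable def hTrunc (R w : ℝ) : ℝ :=
  if |w| ≤ R then 1 else if |w| ≤ 2 * R then (2 * R - |w|) / R else 0

/-- The truncated quadratic generating function `ψ_R(s) = ∫₀^s ∫₀^y h_R(w) dw dy`. -/
noncomputable def psiR (R s : ℝ) : ℝ := ∫ y in (0:ℝ)..s, ∫ w in (0:ℝ)..y, hTrunc R w

open Set

section DoublePrimitive

variable {f g : ℝ → ℝ}

theorem integral_integral_nonneg (hf : ∀ w, 0 ≤ f w) (s : ℝ) :
    0 ≤ ∫ y in (0 : ℝ)..s, ∫ w in (0 : ℝ)..y, f w := by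
  rcases le_total 0 s with hs | hs
  · exact intervalIntegral.integral_nonneg hs fun y hy =>
      intervalIntegral.integral_nonneg hy.1 fun w _ => hf w
  · rw [intervalIntegral.integral_symm, ← intervalIntegral.integral_neg]
    refine intervalIntegral.integral_nonneg hs fun y hy => ?_
    rw [intervalIntegral.integral_symm, neg_neg]
    exact intervalIntegral.integral_nonneg hy.2 fun w _ => hf w

theorem integral_integral_eq_zero {s : ℝ} (hf : ∀ w, |w| ≤ |s| → f w = 0) :
    ∫ y in (0 : ℝ)..s, ∫ w in (0 : ℝ)..y, f w = 0 := by
  have abs_le_of_mem {x y : ℝ} (hx : x ∈ uIcc 0 y) : |x| ≤ |y| := by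
    simpa using abs_sub_left_of_mem_uIcc hx
  refine (intervalIntegral.integral_congr (g := 0) fun y hy => ?_).trans (by simp)
  refine (intervalIntegral.integral_congr (g := 0) fun w hw => ?_).trans (by simp)
  exact hf w ((abs_le_of_mem hw).trans (abs_le_of_mem hy))

theorem integral_integral_sub (hf : Continuous f) (hg : Continuous g) (s : ℝ) :
    ∫ y in (0 : ℝ)..s, ∫ w in (0 : ℝ)..y, (f w - g w) =
      (∫ y in (0 : ℝ)..s, ∫ w in (0 : ℝ)..y, f w) -
        ∫ y in (0 : ℝ)..s, ∫ w in (0 : ℝ)..y, g w := by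
  have primitive_continuous {h : ℝ → ℝ} (hh : Continuous h) :
      Continuous fun y => ∫ w in (0 : ℝ)..y, h w :=
    intervalIntegral.continuous_primitive (fun _ _ => hh.intervalIntegrable _ _) 0
  simp only [intervalIntegral.integral_sub (hf.intervalIntegrable _ _)
    (hg.intervalIntegrable _ _)]
  exact intervalIntegral.integral_sub ((primitive_continuous hf).intervalIntegrable _ _)
    ((primitive_continuous hg).intervalIntegrable _ _)

theorem integral_integral_one (s : ℝ) :
    ∫ y in (0 : ℝ)..s, ∫ _ in (0 : ℝ)..y, (1 : ℝ) = s ^ 2 / 2 := by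
  simp [integral_id]

end DoublePrimitive

section Truncation

variable {R : ℝ}

theorem hTrunc_nonneg (hR : 0 < R) (w : ℝ) : 0 ≤ hTrunc R w := by
  unfold hTrunc
  split_ifs
  · exact zero_le_one
  · exact div_nonneg (by linarith) hR.le
  · exact le_rfl

theorem hTrunc_le_one (hR : 0 < R) (w : ℝ) : hTrunc R w ≤ 1 := by
  unfold hTrunc
  split_ifs with h
  · exact le_rfl
  · rw [div_le_one hR]; linarith
  · exact zero_le_one

theorem continuous_hTrunc (hR : 0 < R) : Continuous (hTrunc R) := by
  refine continuous_const.if_le (((continuous_const.sub continuous_abs).div_const R).if_le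
    continuous_const continuous_abs continuous_const fun w hw => ?_)
    continuous_abs continuous_const fun w hw => ?_
  · simp [hw]
  · rw [if_pos (by linarith), hw]
    field_simp
    ring

theorem sq_div_two_sub_psiR (hR : 0 < R) (s : ℝ) :
    s ^ 2 / 2 - psiR R s = ∫ y in (0 : ℝ)..s, ∫ w in (0 : ℝ)..y, (1 - hTrunc R w) := by
  rw [integral_integral_sub continuous_const (continuous_hTrunc hR), integral_integral_one, psiR]

theorem psiR_nonneg (hR : 0 < R) (s : ℝ) : 0 ≤ psiR R s :=
  integral_integral_nonneg (hTrunc_nonneg hR) s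

theorem psiR_le_sq_div_two (hR : 0 < R) (s : ℝ) : psiR R s ≤ s ^ 2 / 2 := by
  have := integral_integral_nonneg (fun w => sub_nonneg.2 (hTrunc_le_one hR w)) s
  linarith [sq_div_two_sub_psiR hR s]

theorem psiR_eq_of_abs_le (hR : 0 < R) {s : ℝ} (hs : |s| ≤ R) : psiR R s = s ^ 2 / 2 := by
  have := integral_integral_eq_zero (f := fun w => 1 - hTrunc R w) (s := s) fun w hw => by
    simp [hTrunc, hw.trans hs]
  linarith [sq_div_two_sub_psiR hR s]

theorem abs_psiR_sub_le (hR : 0 < R) (s : ℝ) : |psiR R s - s ^ 2 / 2| ≤ s ^ 2 / 2 := by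
  rw [abs_le]
  constructor <;> linarith [psiR_nonneg hR s, psiR_le_sq_div_two hR s]

theorem continuous_psiR (hR : 0 < R) : Continuous (psiR R) :=
  intervalIntegral.continuous_primitive (fun _ _ => Continuous.intervalIntegrable
    (intervalIntegral.continuous_primitive
      (fun _ _ => (continuous_hTrunc hR).intervalIntegrable _ _) 0) _ _) 0

end Truncation

section Weight

variable {l s : ℝ}

theorem one_sub_sq_rpow_nonneg (hs : s ∈ Icc (-1 : ℝ) 1) : 0 ≤ (1 - s ^ 2) ^ l :=
  rpow_nonneg (by nlinarith [hs.1, hs.2]) l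

theorem one_sub_sq_rpow_le (hs : s ∈ Icc (-1 : ℝ) 1) :
    (1 - s ^ 2) ^ l ≤ 1 + (1 - s) ^ l + (1 + s) ^ l := by
  have h₁ : 0 ≤ 1 - s := by linarith [hs.2]
  have h₂ : 0 ≤ 1 + s := by linarith [hs.1]
  have p₁ := rpow_nonneg h₁ l
  have p₂ := rpow_nonneg h₂ l
  rcases le_total 0 l with hl | hl
  · have : (1 - s ^ 2) ^ l ≤ 1 := rpow_le_one (by nlinarith) (by nlinarith) hl
    linarith
  -- for `l ≤ 0`, the factor of `(1 - s)^l (1 + s)^l` whose base is at least `1` is at most `1`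
  rw [show 1 - s ^ 2 = (1 - s) * (1 + s) by ring, mul_rpow h₁ h₂]
  rcases le_total 0 s with hs₀ | hs₀
  · nlinarith [rpow_le_one_of_one_le_of_nonpos (by linarith : 1 ≤ 1 + s) hl]
  · nlinarith [rpow_le_one_of_one_le_of_nonpos (by linarith : 1 ≤ 1 - s) hl]

theorem intervalIntegrable_one_sub_sq_rpow (hl : -1 < l) :
    IntervalIntegrable (fun s => (1 - s ^ 2) ^ l) volume (-1) 1 := by
  have h₁ : IntervalIntegrable (fun s => (1 - s) ^ l) volume (-1) 1 := by
    simpa [show (1 : ℝ) - 2 = -1 by norm_num] using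
      (intervalIntegral.intervalIntegrable_rpow' hl (a := 2) (b := 0)).comp_sub_left 1
  have h₂ : IntervalIntegrable (fun s => (1 + s) ^ l) volume (-1) 1 := by
    simpa [show (2 : ℝ) - 1 = 1 by norm_num] using
      (intervalIntegral.intervalIntegrable_rpow' hl (a := 0) (b := 2)).comp_add_left 1
  have hmeas : Measurable fun s : ℝ => (1 - s ^ 2) ^ l := by fun_prop
  refine ((intervalIntegrable_const (c := 1)).add h₁ |>.add h₂).mono_fun'
    hmeas.aestronglyMeasurable ?_
  filter_upwards [ae_restrict_mem measurableSet_uIoc] with s hs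
  rw [uIoc_of_le (by norm_num)] at hs
  rw [norm_of_nonneg (one_sub_sq_rpow_nonneg (Ioc_subset_Icc_self hs))]
  exact one_sub_sq_rpow_le (Ioc_subset_Icc_self hs)

end Weight

theorem abs_intervalIntegral_le_mul_setIntegral {f w : ℝ → ℝ} {a b B : ℝ} {T : Set ℝ}
    (hab : a ≤ b) (hT : MeasurableSet T) (hf : IntervalIntegrable f volume a b)
    (hw : IntegrableOn w (Icc a b)) (hfw : ∀ s ∈ Icc a b, |f s| ≤ B * T.indicator w s) :
    |∫ s in a..b, f s| ≤ B * ∫ s in Icc a b ∩ T, w s := by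
  rw [intervalIntegral.integral_of_le hab, ← integral_Icc_eq_integral_Ioc]
  calc |∫ s in Icc a b, f s| ≤ ∫ s in Icc a b, |f s| := abs_integral_le_integral_abs
    _ ≤ ∫ s in Icc a b, B * T.indicator w s :=
      setIntegral_mono_on ((intervalIntegrable_iff_integrableOn_Icc_of_le hab).1 hf).abs
        ((hw.indicator hT).const_mul B) measurableSet_Icc hfw
    _ = B * ∫ s in Icc a b ∩ T, w s := by rw [integral_const_mul, setIntegral_indicator hT]

theorem abs_add_mul_le_of_mem_Icc {u b s : ℝ} (hs : s ∈ Icc (-1 : ℝ) 1) :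
    |u + b * s| ≤ |u| + |b| :=
  calc |u + b * s| ≤ |u| + |b| * |s| := by rw [← abs_mul]; exact abs_add_le _ _
    _ ≤ |u| + |b| := by gcongr; exact mul_le_of_le_one_right (abs_nonneg b) (abs_le.2 hs)

theorem abs_integral_psiR_sub_le {R a l K : ℝ} {F : ℝ → ℝ} (hR : 0 < R) (ha : 0 ≤ a)
    (hl : -1 < l) (hF : Continuous F) (hFK : ∀ s ∈ Icc (-1 : ℝ) 1, |F s| ≤ K) (u : ℝ) :
    |(∫ s in (-1 : ℝ)..1, F s * psiR R (u + a * s) * (1 - s ^ 2) ^ l) -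
        ∫ s in (-1 : ℝ)..1, F s * ((u + a * s) ^ 2 / 2) * (1 - s ^ 2) ^ l| ≤
      K * ((|u| + a) ^ 2 / 2) *
        ∫ s in {s : ℝ | s ∈ Icc (-1 : ℝ) 1 ∧ R ≤ |u + a * s|}, (1 - s ^ 2) ^ l := by
  have hw := intervalIntegrable_one_sub_sq_rpow hl
  have hv : Continuous fun s => u + a * s := by fun_prop
  have hψ : IntervalIntegrable (fun s => F s * psiR R (u + a * s) * (1 - s ^ 2) ^ l)
      volume (-1) 1 := hw.continuousOn_mul (hF.mul ((continuous_psiR hR).comp hv)).continuousOn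
  have hE : IntervalIntegrable (fun s => F s * ((u + a * s) ^ 2 / 2) * (1 - s ^ 2) ^ l)
      volume (-1) 1 := hw.continuousOn_mul (by fun_prop)
  rw [← intervalIntegral.integral_sub hψ hE]
  refine abs_intervalIntegral_le_mul_setIntegral (T := {s | R ≤ |u + a * s|}) (by norm_num)
    (measurableSet_le measurable_const (by fun_prop)) (hψ.sub hE)
    ((intervalIntegrable_iff_integrableOn_Icc_of_le (by norm_num)).1 hw) fun s hs => ?_
  rw [← sub_mul, ← mul_sub, abs_mul, abs_mul, abs_of_nonneg (one_sub_sq_rpow_nonneg hs)]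
  by_cases hRv : s ∈ {s : ℝ | R ≤ |u + a * s|}
  · rw [indicator_of_mem hRv]
    have hvM : |u + a * s| ≤ |u| + a := by
      simpa [abs_of_nonneg ha] using abs_add_mul_le_of_mem_Icc (u := u) (b := a) hs
    have hsq : (u + a * s) ^ 2 / 2 ≤ (|u| + a) ^ 2 / 2 := by
      rw [← sq_abs]; gcongr
    have hK : 0 ≤ K := (abs_nonneg _).trans (hFK s hs)
    have hw₀ := one_sub_sq_rpow_nonneg (l := l) hs
    gcongr
    · exact hFK s hs
    · exact (abs_psiR_sub_le hR _).trans hsq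
  · rw [indicator_of_notMem hRv, psiR_eq_of_abs_le hR (not_le.1 hRv).le]
    simp

/-- There is a constant `C > 0`, depending only on `γ` and independent of `R`, with
`|η^{ψ_R}(ρ,u) − η^{ψ_E}(ρ,u)| ≤ C ρ(|u| + ρ^θ)² ∫_S (1 − s²)^λ ds` and
`|q^{ψ_R}(ρ,u) − q^{ψ_E}(ρ,u)| ≤ C ρ(|u| + ρ^θ)³ ∫_S (1 − s²)^λ ds`,
where `ψ_E(s) = s²/2` and `S = {s ∈ [−1,1] : |u + ρ^θ s| ≥ R}`. -/
theorem entropy_psiR_minus_mechanical_bounds (γ : ℝ) (hγ : 1 < γ) :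
    ∃ C : ℝ, 0 < C ∧ ∀ R : ℝ, 0 < R → ∀ ρ : ℝ, 0 < ρ → ∀ u : ℝ,
      |entropy γ (psiR R) ρ u - entropy γ (fun s => s ^ 2 / 2) ρ u| ≤
        C * ρ * (|u| + ρ ^ thetaExp γ) ^ 2 *
          ∫ s in {s : ℝ | s ∈ Set.Icc (-1 : ℝ) 1 ∧ R ≤ |u + ρ ^ thetaExp γ * s|},
            (1 - s ^ 2) ^ lamExp γ ∧
      |entropyFlux γ (psiR R) ρ u - entropyFlux γ (fun s => s ^ 2 / 2) ρ u| ≤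
        C * ρ * (|u| + ρ ^ thetaExp γ) ^ 3 *
          ∫ s in {s : ℝ | s ∈ Set.Icc (-1 : ℝ) 1 ∧ R ≤ |u + ρ ^ thetaExp γ * s|},
            (1 - s ^ 2) ^ lamExp γ := by
  have hθ : 0 < thetaExp γ := by unfold thetaExp; linarith
  have hl : -1 < lamExp γ := by
    unfold lamExp; rw [lt_div_iff₀ (by linarith)]; linarith
  refine ⟨(1 + thetaExp γ) / 2, by positivity, fun R hR ρ hρ u => ?_⟩
  set a := ρ ^ thetaExp γ
  set I := ∫ s in {s : ℝ | s ∈ Icc (-1 : ℝ) 1 ∧ R ≤ |u + a * s|}, (1 - s ^ 2) ^ lamExp γ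
  have ha : 0 ≤ a := by positivity
  have hI : 0 ≤ I := setIntegral_nonneg (by measurability) fun s hs => one_sub_sq_rpow_nonneg hs.1
  have hent := abs_integral_psiR_sub_le (K := 1) hR ha hl continuous_const
    (fun _ _ => abs_one.le) u
  have hflux := abs_integral_psiR_sub_le (K := (1 + thetaExp γ) * (|u| + a)) hR ha hl
    (F := fun s => u + thetaExp γ * a * s) (by fun_prop) (fun s hs => by
      have := abs_add_mul_le_of_mem_Icc (u := u) (b := thetaExp γ * a) hs
      rw [abs_mul, abs_of_pos hθ, abs_of_nonneg ha] at this
      nlinarith [abs_nonneg u]) u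
  simp only [one_mul] at hent
  simp only [entropy, entropyFlux, ← mul_sub, abs_mul, abs_of_pos hρ]
  have hρM := mul_nonneg (mul_nonneg hρ.le (pow_nonneg (by positivity : 0 ≤ |u| + a) 2)) hI
  constructor
  · nlinarith [mul_le_mul_of_nonneg_left hent hρ.le]
  · nlinarith [mul_le_mul_of_nonneg_left hflux hρ.le]
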